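/- Size bound for the updatability predicate: there is a constant c such that for every update specification S_up = (D, ann_up) and update type ut, the syntactic size of the predicate U_ut = U_ut^1 ∧ U_ut^2 is at most c · (|S_ut| + 1), where S_ut is the set of annotations of type ut, and hence at most c · (|ann_up| + 1). -/

import Mathlib

/-! Each annotation adds at most 2, 4 and 5 constructors to the three folds building
`U_ut`, so `|U_ut| ≤ 5 + 11 · |S_ut|`, and `|S_ut| ≤ |ann_up|` for a sublist. -/

/-- Syntactic annotation values (qualifiers abstracted away). -/
inductive UVal where
  | Y | N | Q | Nh | Qh
deriving DecidableEq

/-- Inductive syntax of XPath-like predicates: truth constants, element-type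
tests (`ε::A`), embedded qualifiers (bounded size), the `↑*::*[q₁][1][q₂]`
construct, ancestor tests `↑+::A[q]`, and Boolean connectives. -/
inductive UPred (σ : Type) where
  | tt : UPred σ
  | ff : UPred σ
  | test : σ → UPred σ
  | qual : UPred σ
  | ancStarFirst : UPred σ → UPred σ → UPred σ
  | ancPlus : σ → UPred σ → UPred σ
  | and : UPred σ → UPred σ → UPred σ
  | or : UPred σ → UPred σ → UPred σ
  | not : UPred σ → UPred σ

/-- Size of a predicate: number of constructors. -/
def UPred.size {σ : Type} : UPred σ → ℕ
  | .tt => 1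
  | .ff => 1
  | .test _ => 1
  | .qual => 1
  | .ancStarFirst p q => 1 + p.size + q.size
  | .ancPlus _ q => 1 + q.size
  | .and p q => 1 + p.size + q.size
  | .or p q => 1 + p.size + q.size
  | .not p => 1 + p.size

/-- `U_ut^1 = ↑*::*[⋁ ε::A][1][⋁ valid part]`, built from the list `S` of
annotations of type `ut` (element type together with its value). -/
def buildU1 {σ : Type} (S : List (σ × UVal)) : UPred σ :=
  UPred.ancStarFirst
    (S.foldr (fun a acc => UPred.or (UPred.test a.1) acc) UPred.ff)
    (S.foldr (fun a acc =>
      match a.2 with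
      | UVal.Y => UPred.or (UPred.test a.1) acc
      | UVal.Q => UPred.or (UPred.and (UPred.test a.1) UPred.qual) acc
      | UVal.Qh => UPred.or (UPred.and (UPred.test a.1) UPred.qual) acc
      | _ => acc) UPred.ff)

/-- `U_ut^2 = ⋀_{N_h} not(↑+::A) ∧ ⋀_{[Q]_h} not(↑+::A[not Q])`. -/
def buildU2 {σ : Type} (S : List (σ × UVal)) : UPred σ :=
  S.foldr (fun a acc =>
    match a.2 with
    | UVal.Nh => UPred.and (UPred.not (UPred.ancPlus a.1 UPred.tt)) acc
    | UVal.Qh =>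
        UPred.and (UPred.not (UPred.ancPlus a.1 (UPred.not UPred.qual))) acc
    | _ => acc) UPred.tt

/-- `U_ut = U_ut^1 ∧ U_ut^2`. -/
def buildU {σ : Type} (S : List (σ × UVal)) : UPred σ :=
  UPred.and (buildU1 S) (buildU2 S)

theorem List.foldr_measure_le {α β : Type*} (μ : β → ℕ) (f : α → β → β) (k : ℕ)
    (hf : ∀ a b, μ (f a b) ≤ μ b + k) (init : β) (S : List α) :
    μ (S.foldr f init) ≤ μ init + k * S.length := by
  induction S with
  | nil => simp
  | cons a t ih =>
    rw [List.foldr_cons, List.length_cons]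
    linarith [hf a (t.foldr f init)]

theorem buildU1_size_le {σ : Type} (S : List (σ × UVal)) :
    (buildU1 S).size ≤ 3 + 6 * S.length := by
  calc (buildU1 S).size ≤ 1 + (1 + 2 * S.length) + (1 + 4 * S.length) := by
        simp only [buildU1, UPred.size]
        gcongr
        · exact List.foldr_measure_le UPred.size _ 2
            (fun _ _ => by simp only [UPred.size]; omega) UPred.ff S
        · exact List.foldr_measure_le UPred.size _ 4
            (fun ⟨_, v⟩ _ => by cases v <;> simp only [UPred.size] <;> omega) UPred.ff S
    _ = 3 + 6 * S.length := by ring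

theorem buildU2_size_le {σ : Type} (S : List (σ × UVal)) :
    (buildU2 S).size ≤ 1 + 5 * S.length :=
  List.foldr_measure_le UPred.size _ 5
    (fun ⟨_, v⟩ _ => by cases v <;> simp only [UPred.size] <;> omega) UPred.tt S

theorem buildU_size_le {σ : Type} (S : List (σ × UVal)) :
    (buildU S).size ≤ 11 * (S.length + 1) := by
  have h1 := buildU1_size_le S
  have h2 := buildU2_size_le S
  simp only [buildU, UPred.size]
  omega

/-- size bound for the updatability predicate: there is a constant
`c` such that for every update specification and update type, with `S_ut` the list
of annotations of type `ut` (a sublist of the full annotation list `annup`), the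
size of `U_ut` is at most `c · (|S_ut| + 1)`, hence at most `c · (|annup| + 1)`. -/
theorem stmt13 :
    ∃ c : ℕ,
      (∀ (σ : Type) (S : List (σ × UVal)),
        (buildU S).size ≤ c * (S.length + 1)) ∧
      (∀ (σ : Type) (S annup : List (σ × UVal)), S.Sublist annup →
        (buildU S).size ≤ c * (annup.length + 1)) := by
  refine ⟨11, fun _ S => buildU_size_le S, fun _ S annup hS => ?_⟩
  calc (buildU S).size ≤ 11 * (S.length + 1) := buildU_size_le S
    _ ≤ 11 * (annup.length + 1) := by have := hS.length_le; omega
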